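/- Let h ≥ 3, let θ be a nontrivial equivalence relation on E_k with t equivalence classes C_0,…,C_{t−1}, and let φ : E_k → E_t be defined by φ(x) = i if x ∈ C_i. An h-ary relation ρ on E_k is a θ-closed h-regular relation if and only if there exists an h-regular relation ψ on E_t such that ρ = φ^{−1}(ψ), where φ^{−1}(ψ) = {(a_1,…,a_h) ∈ E_k^h : (φ(a_1),…,φ(a_h)) ∈ ψ}. -/

import Mathlib

/-- A finitary operation on `Fin k`: a pair of an arity `n` and a function
`(Fin n → Fin k) → Fin k`. -/
abbrev Ops (k : ℕ) := Σ n : ℕ, ((Fin n → Fin k) → Fin k)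

/-- The set of finitary operations preserving a binary relation `θ` on `Fin k`. -/
def PolB {k : ℕ} (θ : Set (Fin k × Fin k)) : Set (Ops k) :=
  {f | ∀ a b : Fin f.1 → Fin k, (∀ i, (a i, b i) ∈ θ) → (f.2 a, f.2 b) ∈ θ}

/-- The set of finitary operations preserving an `h`-ary relation `ρ` on `Fin k`. -/
def PolH {k h : ℕ} (ρ : Set (Fin h → Fin k)) : Set (Ops k) :=
  {f | ∀ M : Fin h → Fin f.1 → Fin k,
    (∀ i, (fun j => M j i) ∈ ρ) → (fun j => f.2 (M j)) ∈ ρ}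

/-- A clone: contains all projections and is closed under composition. -/
def IsClone {k : ℕ} (C : Set (Ops k)) : Prop :=
  (∀ (n : ℕ) (i : Fin n), (⟨n, fun x => x i⟩ : Ops k) ∈ C) ∧
  (∀ (n m : ℕ) (f : (Fin n → Fin k) → Fin k) (g : Fin n → (Fin m → Fin k) → Fin k),
    (⟨n, f⟩ : Ops k) ∈ C → (∀ i, (⟨m, g i⟩ : Ops k) ∈ C) →
    (⟨m, fun x => f fun i => g i x⟩ : Ops k) ∈ C)

/-- `C` is maximal in `D`: `C ⊊ D` and no clone lies strictly between them. -/
def MaximalIn {k : ℕ} (C D : Set (Ops k)) : Prop :=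
  C ⊂ D ∧ ∀ F : Set (Ops k), IsClone F → ¬(C ⊂ F ∧ F ⊂ D)

/-- `θ` is an equivalence relation (as a set of pairs). -/
def IsEquivRel {A : Type*} (θ : Set (A × A)) : Prop :=
  (∀ a, (a, a) ∈ θ) ∧ (∀ a b, (a, b) ∈ θ → (b, a) ∈ θ) ∧
    (∀ a b c, (a, b) ∈ θ → (b, c) ∈ θ → (a, c) ∈ θ)

/-- The diagonal relation `Δ` on `Fin k`. -/
def diag (k : ℕ) : Set (Fin k × Fin k) := {p | p.1 = p.2}

/-- A nontrivial equivalence relation: `Δ ⊊ θ ⊊ (Fin k)²`. -/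
def NontrivEquiv {k : ℕ} (θ : Set (Fin k × Fin k)) : Prop :=
  IsEquivRel θ ∧ diag k ⊂ θ ∧ θ ⊂ Set.univ

/-- Relational composition `α ∘ β = {(a,c) : ∃ b, (a,b) ∈ α ∧ (b,c) ∈ β}`. -/
def relComp {k : ℕ} (α β : Set (Fin k × Fin k)) : Set (Fin k × Fin k) :=
  {p | ∃ b, (p.1, b) ∈ α ∧ (b, p.2) ∈ β}

/-- The set of equivalence classes of `θ`. -/
def classesOf {A : Type*} (θ : Set (A × A)) : Set (Set A) :=
  {S | ∃ a : A, S = {b | (a, b) ∈ θ}}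

/-- Totally reflexive: every tuple with a repeated entry is in `ρ`. -/
def TotallyReflexive {k h : ℕ} (ρ : Set (Fin h → Fin k)) : Prop :=
  ∀ v : Fin h → Fin k, (∃ i j : Fin h, i ≠ j ∧ v i = v j) → v ∈ ρ

/-- Totally symmetric: closed under all permutations of coordinates. -/
def TotallySymmetric {k h : ℕ} (ρ : Set (Fin h → Fin k)) : Prop :=
  ∀ (v : Fin h → Fin k) (σ : Equiv.Perm (Fin h)), v ∈ ρ → v ∘ ⇑σ ∈ ρ

/-- The center of an `h`-ary relation: elements `a` such that every tuple whose
first coordinate is `a` lies in `ρ`. -/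
def center {k h : ℕ} (ρ : Set (Fin h → Fin k)) : Set (Fin k) :=
  {a | ∀ v : Fin h → Fin k, (∀ i : Fin h, (i : ℕ) = 0 → v i = a) → v ∈ ρ}

/-- An `h`-ary central relation. -/
def IsCentralRel {k h : ℕ} (ρ : Set (Fin h → Fin k)) : Prop :=
  ρ ≠ Set.univ ∧ TotallyReflexive ρ ∧ TotallySymmetric ρ ∧ (center ρ).Nonempty

/-- `η = {(u₁,…,u_h) : (u₁,u₂) ∈ θ}` (0-indexed: first two coordinates θ-related). -/
def eta {k : ℕ} (h : ℕ) (θ : Set (Fin k × Fin k)) : Set (Fin h → Fin k) :=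
  {v | ∀ i j : Fin h, (i : ℕ) = 0 → (j : ℕ) = 1 → (v i, v j) ∈ θ}

/-- `ρ_{l,θ}`: tuples whose coordinates from position `l` onwards can be moved
inside their θ-classes so as to land in `ρ` (0-indexed coordinates). -/
def rhoTh {k h : ℕ} (l : ℕ) (θ : Set (Fin k × Fin k)) (ρ : Set (Fin h → Fin k)) :
    Set (Fin h → Fin k) :=
  {a | ∃ u : Fin h → Fin k, (∀ j : Fin h, l ≤ (j : ℕ) → (u j, a j) ∈ θ) ∧
    (fun j : Fin h => if (j : ℕ) < l then a j else u j) ∈ ρ}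

/-- `ρ` is θ-closed: `ρ = ρ_{0,θ}`. -/
def ThetaClosed {k h : ℕ} (θ : Set (Fin k × Fin k)) (ρ : Set (Fin h → Fin k)) : Prop :=
  ρ = rhoTh 0 θ ρ

/-- `γ_σ = {(a_{σ(1)},…,a_{σ(h)}) : a ∈ γ}`. -/
def permuted {k h : ℕ} (σ : Equiv.Perm (Fin h)) (γ : Set (Fin h → Fin k)) :
    Set (Fin h → Fin k) :=
  {w | w ∘ ⇑σ.symm ∈ γ}

/-- A transversal of order `l` for the θ-classes: a system of representatives
(pairwise θ-unrelated, meeting every class) such that every tuple whose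
coordinates from position `l` onwards lie in `T` belongs to `ρ`. -/
def IsTransversal {k h : ℕ} (θ : Set (Fin k × Fin k)) (ρ : Set (Fin h → Fin k)) (l : ℕ)
    (T : Set (Fin k)) : Prop :=
  (∀ u ∈ T, ∀ v ∈ T, u ≠ v → (u, v) ∉ θ) ∧
  (∀ a : Fin k, ∃ u ∈ T, (a, u) ∈ θ) ∧
  (∀ w : Fin h → Fin k, (∀ j : Fin h, l ≤ (j : ℕ) → w j ∈ T) → w ∈ ρ)

/-- `ρ` is weakly θ-closed of order `l` (`1 ≤ l ≤ h-1`). -/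
def WeaklyThetaClosed {k h : ℕ} (θ : Set (Fin k × Fin k)) (ρ : Set (Fin h → Fin k))
    (l : ℕ) : Prop :=
  1 ≤ l ∧ l ≤ h - 1 ∧ (∃ T : Set (Fin k), IsTransversal θ ρ (l - 1) T) ∧
  ρ = ⋂ σ : Equiv.Perm (Fin h), permuted σ (rhoTh l θ ρ)

/-- Type I: `η ⊆ ρ` and every θ-class contains a central element of `ρ`. -/
def TypeI {k h : ℕ} (θ : Set (Fin k × Fin k)) (ρ : Set (Fin h → Fin k)) : Prop :=
  eta h θ ⊆ ρ ∧ ∀ a : Fin k, ∃ c : Fin k, (a, c) ∈ θ ∧ c ∈ center ρ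

/-- Type II: `ρ` is θ-closed. -/
def TypeII {k h : ℕ} (θ : Set (Fin k × Fin k)) (ρ : Set (Fin h → Fin k)) : Prop :=
  ThetaClosed θ ρ

/-- Type III: `ρ` is weakly θ-closed of some order and `η ⊆ ρ`. -/
def TypeIII {k h : ℕ} (θ : Set (Fin k × Fin k)) (ρ : Set (Fin h → Fin k)) : Prop :=
  (∃ l : ℕ, WeaklyThetaClosed θ ρ l) ∧ eta h θ ⊆ ρ

/-- `τ` is a diagonal relation through `θ`. -/
def IsDiagonal {k h : ℕ} (θ : Set (Fin k × Fin k)) (τ : Set (Fin h → Fin k)) : Prop :=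
  ∃ (ε₁ : Setoid (Fin h)) (ε₂ : Set (Fin h × Fin h)),
    (∀ p ∈ ε₂, (∀ j, ε₁.r p.1 j → p.1 ≤ j) ∧ (∀ j, ε₁.r p.2 j → p.2 ≤ j)) ∧
    (∀ i : Fin h, (∀ j, ε₁.r i j → i ≤ j) → (i, i) ∈ ε₂) ∧
    (∀ i j, (i, j) ∈ ε₂ → (j, i) ∈ ε₂) ∧
    (∀ i j l, (i, j) ∈ ε₂ → (j, l) ∈ ε₂ → (i, l) ∈ ε₂) ∧
    τ = {a | (∀ i j, ε₁.r i j → a i = a j) ∧ (∀ i j, (i, j) ∈ ε₂ → (a i, a j) ∈ θ)}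

/-- `ρ^l_{0,θ}`: `l`-tuples which can be moved inside their θ-classes so that
every `h`-tuple with all entries among the moved elements lies in `ρ`. -/
def rhoPow {k h : ℕ} (l : ℕ) (θ : Set (Fin k × Fin k)) (ρ : Set (Fin h → Fin k)) :
    Set (Fin l → Fin k) :=
  {u | ∃ e : Fin l → Fin k, (∀ i, (e i, u i) ∈ θ) ∧
    ∀ w : Fin h → Fin k, (∀ j, ∃ i, w j = e i) → w ∈ ρ}

/-- An `h`-regular family of equivalence relations. -/
def IsHRegFamily {A : Type*} (h : ℕ) {m : ℕ} (T : Fin m → Set (A × A)) : Prop :=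
  (∀ i, IsEquivRel (T i)) ∧
  (∀ i, (classesOf (T i)).ncard = h) ∧
  (∀ x : Fin m → A, (⋂ i, {b | (x i, b) ∈ T i}).Nonempty)

/-- The `h`-regular relation determined by the family `T`: tuples whose set of
components meets at most `h-1` classes of each member of the family. -/
def hRegRel {A : Type*} (h : ℕ) {m : ℕ} (T : Fin m → Set (A × A)) : Set (Fin h → A) :=
  {a | ∀ i : Fin m, {S ∈ classesOf (T i) | ∃ j : Fin h, a j ∈ S}.ncard ≤ h - 1}

/-- `ρ` is an `h`-regular relation: determined by some `h`-regular family. -/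
def IsHRegularRel {A : Type*} (h : ℕ) (ρ : Set (Fin h → A)) : Prop :=
  ∃ m : ℕ, 1 ≤ m ∧ ∃ T : Fin m → Set (A × A), IsHRegFamily h T ∧ ρ = hRegRel h T

/-!
The heart of the matter is that a θ-closed `h`-regular relation `λ_T` forces `θ ⊆ T i` for every
member of the family. Otherwise pick `(y, x) ∈ θ` with `x, y` in different `T i`-classes. By
regularity one can choose, in each of the `h - 1` classes of `T i` other than that of `x`, an
element lying in the class of `y` for every other member of the family. The tuple made of `y`
and these elements misses the class of `x` in `T i` and meets a single class of every other
member, so it lies in `λ_T`; replacing `y` by `x` gives a θ-related tuple meeting all `h`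
classes of `T i`, contradicting θ-closedness. Once `θ ⊆ T i`, each `T i` is the pullback along
`φ` of an equivalence on `E_t`, and `λ_T` is the pullback of the corresponding regular relation.
-/

open Function

section Classes

variable {A B : Type*}

theorem IsEquivRel.eq_of_mem_classesOf {θ : Set (A × A)} (hθ : IsEquivRel θ) {C D : Set A}
    {z : A} (hC : C ∈ classesOf θ) (hzC : z ∈ C) (hD : D ∈ classesOf θ) (hzD : z ∈ D) :
    C = D := by
  obtain ⟨-, hs, ht⟩ := hθ
  obtain ⟨c, rfl⟩ := hC
  obtain ⟨d, rfl⟩ := hD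
  ext b
  exact ⟨fun hb => ht _ _ _ hzD (ht _ _ _ (hs _ _ hzC) hb),
    fun hb => ht _ _ _ hzC (ht _ _ _ (hs _ _ hzD) hb)⟩

theorem IsEquivRel.preimage_image_prodMap {T : Set (A × A)} (hT : IsEquivRel T) {f : A → B}
    (hker : ∀ x y, f x = f y → (x, y) ∈ T) : Prod.map f f ⁻¹' (Prod.map f f '' T) = T := by
  refine (Set.subset_preimage_image _ _).antisymm' ?_
  rintro ⟨a, b⟩ ⟨⟨x, y⟩, hxy, hfx⟩
  simp only [Prod.map, Prod.mk.injEq] at hfx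
  exact hT.2.2 _ _ _ (hker _ _ hfx.1.symm) (hT.2.2 _ _ _ hxy (hker _ _ hfx.2))

theorem isEquivRel_preimage_prodMap_iff {f : A → B} (hf : Surjective f) {S : Set (B × B)} :
    IsEquivRel (Prod.map f f ⁻¹' S) ↔ IsEquivRel S := by
  simp only [IsEquivRel, hf.forall]
  rfl

theorem classesOf_preimage_prodMap {f : A → B} (hf : Surjective f) (S : Set (B × B)) :
    classesOf (Prod.map f f ⁻¹' S) = (f ⁻¹' ·) '' classesOf S := by
  ext C
  constructor
  · rintro ⟨a, rfl⟩
    exact ⟨_, ⟨f a, rfl⟩, rfl⟩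
  · rintro ⟨D, ⟨p, rfl⟩, rfl⟩
    obtain ⟨a, rfl⟩ := hf p
    exact ⟨a, rfl⟩

theorem ncard_classesOf_preimage_prodMap {f : A → B} (hf : Surjective f) (S : Set (B × B)) :
    (classesOf (Prod.map f f ⁻¹' S)).ncard = (classesOf S).ncard := by
  rw [classesOf_preimage_prodMap hf, Set.ncard_image_of_injective _ hf.preimage_injective]

variable {h m : ℕ}

theorem isHRegFamily_preimage_prodMap_iff {f : A → B} (hf : Surjective f)
    {S : Fin m → Set (B × B)} :
    IsHRegFamily h (fun i => Prod.map f f ⁻¹' S i) ↔ IsHRegFamily h S := by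
  have hint : ∀ x : Fin m → A, ⋂ i, {b | (x i, b) ∈ Prod.map f f ⁻¹' S i}
      = f ⁻¹' ⋂ i, {q | (f (x i), q) ∈ S i} := fun x => by
    rw [Set.preimage_iInter]; rfl
  simp only [IsHRegFamily, isEquivRel_preimage_prodMap_iff hf,
    ncard_classesOf_preimage_prodMap hf, hint, hf.nonempty_preimage]
  rw [hf.comp_left.forall (p := fun p : Fin m → B => (⋂ i, {q | (p i, q) ∈ S i}).Nonempty)]
  rfl

theorem hRegRel_preimage_prodMap {f : A → B} (hf : Surjective f) (S : Fin m → Set (B × B)) :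
    hRegRel h (fun i => Prod.map f f ⁻¹' S i) = {a | (fun j => f (a j)) ∈ hRegRel h S} := by
  ext a
  refine forall_congr' fun i => ?_
  have hmet : {C ∈ classesOf (Prod.map f f ⁻¹' S i) | ∃ j, a j ∈ C}
      = (f ⁻¹' ·) '' {D ∈ classesOf (S i) | ∃ j, f (a j) ∈ D} := by
    rw [classesOf_preimage_prodMap hf]
    ext C
    constructor
    · rintro ⟨⟨D, hD, rfl⟩, hmem⟩
      exact ⟨D, ⟨hD, hmem⟩, rfl⟩
    · rintro ⟨D, ⟨hD, hmem⟩, rfl⟩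
      exact ⟨⟨D, hD, rfl⟩, hmem⟩
  dsimp only
  rw [hmet, Set.ncard_image_of_injective _ hf.preimage_injective]

theorem mem_hRegRel_iff {T : Fin m → Set (A × A)} (hh : 0 < h)
    (hT : ∀ i, (classesOf (T i)).ncard = h) {a : Fin h → A} :
    a ∈ hRegRel h T ↔ ∀ i, ∃ C ∈ classesOf (T i), ∀ j, a j ∉ C := by
  refine forall_congr' fun i => ?_
  have hfin : (classesOf (T i)).Finite := Set.finite_of_ncard_pos (by rw [hT i]; exact hh)
  constructor
  · intro hle
    by_contra! hmet
    have : {C ∈ classesOf (T i) | ∃ j, a j ∈ C} = classesOf (T i) :=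
      Set.sep_eq_self_iff_mem_true.mpr hmet
    rw [this, hT i] at hle
    omega
  · rintro ⟨C, hC, hmiss⟩
    have hmet : {C ∈ classesOf (T i) | ∃ j, a j ∈ C} ⊂ classesOf (T i) :=
      ⟨Set.sep_subset _ _, fun hsub => by obtain ⟨-, j, hj⟩ := hsub hC; exact hmiss j hj⟩
    have := Set.ncard_lt_ncard hmet hfin
    rw [hT i] at this
    omega

theorem IsHRegFamily.exists_mem_rel_of_ne {T : Fin m → Set (A × A)} (hT : IsHRegFamily h T)
    {i : Fin m} {C : Set A} (hC : C ∈ classesOf (T i)) (y : A) :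
    ∃ w ∈ C, ∀ i' ≠ i, (y, w) ∈ T i' := by
  obtain ⟨c, rfl⟩ := hC
  obtain ⟨w, hw⟩ := hT.2.2 fun i' => if i' = i then c else y
  simp only [Set.mem_iInter, Set.mem_ofPred_eq] at hw
  exact ⟨w, by simpa using hw i, fun i' hi' => by simpa [hi'] using hw i'⟩

end Classes

section ThetaClosed

variable {k h : ℕ} {θ : Set (Fin k × Fin k)}

theorem thetaClosed_iff (hθ : ∀ a, (a, a) ∈ θ) {ρ : Set (Fin h → Fin k)} :
    ThetaClosed θ ρ ↔ ∀ u ∈ ρ, ∀ a : Fin h → Fin k, (∀ j, (u j, a j) ∈ θ) → a ∈ ρ := by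
  have hrhoTh : rhoTh 0 θ ρ = {a | ∃ u ∈ ρ, ∀ j, (u j, a j) ∈ θ} := by
    ext a
    simp [rhoTh, and_comm]
  rw [ThetaClosed, hrhoTh]
  constructor
  · intro hρ u hu a hua
    rw [hρ]
    exact ⟨u, hu, hua⟩
  · intro hρ
    exact Set.Subset.antisymm (fun a ha => ⟨a, ha, fun _ => hθ _⟩)
      fun a ⟨u, hu, hua⟩ => hρ u hu a hua

theorem thetaClosed_setOf_comp_mem {t : ℕ} {φ : Fin k → Fin t} (hθ : ∀ a, (a, a) ∈ θ)
    (hφ : ∀ x y, (x, y) ∈ θ → φ x = φ y) (ψ : Set (Fin h → Fin t)) :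
    ThetaClosed θ {a : Fin h → Fin k | (fun j => φ (a j)) ∈ ψ} := by
  rw [thetaClosed_iff hθ]
  intro u hu a hua
  have : (fun j => φ (a j)) = fun j => φ (u j) := funext fun j => (hφ _ _ (hua j)).symm
  rwa [Set.mem_ofPred_eq, this]

theorem IsHRegFamily.subset_of_thetaClosed {m : ℕ} {T : Fin m → Set (Fin k × Fin k)}
    (hh : 2 ≤ h) (hθ : ∀ a, (a, a) ∈ θ) (hT : IsHRegFamily h T)
    (hclosed : ThetaClosed θ (hRegRel h T)) (i : Fin m) : θ ⊆ T i := by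
  obtain ⟨n, rfl⟩ : ∃ n, h = n + 1 := ⟨h - 1, by omega⟩
  have hequiv := hT.1
  have hcard := hT.2.1
  rintro ⟨y, x⟩ hyx
  refine (hequiv i).2.1 _ _ ?_
  by_contra hxy
  set X := {b | (x, b) ∈ T i}
  have hX : X ∈ classesOf (T i) := ⟨x, rfl⟩
  let e : Fin n ≃ ↥(classesOf (T i) \ {X}) := (Finite.equivFinOfCardEq (by
    rw [Nat.card_coe_set_eq, Set.ncard_sdiff_singleton_of_mem hX, hcard i]; rfl)).symm
  choose w hwe hwy using fun r => hT.exists_mem_rel_of_ne (e r).2.1 y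
  have hwX : ∀ r, w r ∉ X := fun r hr =>
    (e r).2.2 ((hequiv i).eq_of_mem_classesOf (e r).2.1 (hwe r) hX hr)
  have hyes : Fin.cons y w ∈ hRegRel (n + 1) T := by
    rw [mem_hRegRel_iff n.succ_pos hcard]
    intro i'
    by_cases hi' : i' = i
    · subst hi'
      exact ⟨X, hX, Fin.cases hxy hwX⟩
    · have hY : {b | (y, b) ∈ T i'} ∈ classesOf (T i') := ⟨y, rfl⟩
      obtain ⟨C, hC, hCY⟩ := Set.exists_ne_of_one_lt_ncard (by rw [hcard i']; omega)
        {b | (y, b) ∈ T i'}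
      refine ⟨C, hC, Fin.cases (fun hyC => ?_) fun r hwC => ?_⟩
      · exact hCY ((hequiv i').eq_of_mem_classesOf hC hyC hY ((hequiv i').1 y))
      · exact hCY ((hequiv i').eq_of_mem_classesOf hC hwC hY (hwy r i' hi'))
  have hno : Fin.cons x w ∉ hRegRel (n + 1) T := by
    rw [mem_hRegRel_iff n.succ_pos hcard]
    intro hmiss
    obtain ⟨C, hC, hCmiss⟩ := hmiss i
    by_cases hCX : C = X
    · exact hCmiss 0 (hCX ▸ (hequiv i).1 x)
    · let r := e.symm ⟨C, hC, hCX⟩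
      exact hCmiss r.succ (by simpa [r] using hwe r)
  exact hno ((thetaClosed_iff hθ).1 hclosed _ hyes _ (Fin.cases hyx fun r => hθ (w r)))

end ThetaClosed

theorem stmt18_general (k t h : ℕ) (hh : 3 ≤ h)
    (θ : Set (Fin k × Fin k))
    (φ : Fin k → Fin t) (hφsurj : Function.Surjective φ)
    (hφ : ∀ x y : Fin k, (x, y) ∈ θ ↔ φ x = φ y)
    (ρ : Set (Fin h → Fin k)) :
    (IsHRegularRel h ρ ∧ ThetaClosed θ ρ) ↔
      ∃ ψ : Set (Fin h → Fin t), IsHRegularRel h ψ ∧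
        ρ = {a | (fun j => φ (a j)) ∈ ψ} := by
  have hrefl : ∀ a, (a, a) ∈ θ := fun a => (hφ a a).2 rfl
  constructor
  · rintro ⟨⟨m, hm, T, hT, rfl⟩, hclosed⟩
    have hpull : T = fun i => Prod.map φ φ ⁻¹' (Prod.map φ φ '' T i) := funext fun i =>
      ((hT.1 i).preimage_image_prodMap fun x y hxy =>
        hT.subset_of_thetaClosed (by omega) hrefl hclosed i ((hφ x y).2 hxy)).symm
    refine ⟨hRegRel h fun i => Prod.map φ φ '' T i, ⟨m, hm, _, ?_, rfl⟩, ?_⟩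
    · rwa [← isHRegFamily_preimage_prodMap_iff hφsurj, ← hpull]
    · rw [← hRegRel_preimage_prodMap hφsurj, ← hpull]
  · rintro ⟨ψ, ⟨m, hm, S, hS, rfl⟩, rfl⟩
    exact ⟨⟨m, hm, _, (isHRegFamily_preimage_prodMap_iff hφsurj).2 hS,
      (hRegRel_preimage_prodMap hφsurj S).symm⟩,
      thetaClosed_setOf_comp_mem hrefl (fun x y => (hφ x y).1) _⟩

/-- For `h ≥ 3` and `φ : E_k → E_t` the canonical surjection onto the θ-classes,
an `h`-ary relation `ρ` on `E_k` is a θ-closed `h`-regular relation iff there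
is an `h`-regular relation `ψ` on `E_t` with `ρ = φ⁻¹(ψ)`. -/
theorem stmt18 (k t h : ℕ) (hh : 3 ≤ h)
    (θ : Set (Fin k × Fin k)) (hθ : NontrivEquiv θ)
    (φ : Fin k → Fin t) (hφsurj : Function.Surjective φ)
    (hφ : ∀ x y : Fin k, (x, y) ∈ θ ↔ φ x = φ y)
    (ρ : Set (Fin h → Fin k)) :
    (IsHRegularRel h ρ ∧ ThetaClosed θ ρ) ↔
      ∃ ψ : Set (Fin h → Fin t), IsHRegularRel h ψ ∧
        ρ = {a | (fun j => φ (a j)) ∈ ψ} :=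
  stmt18_general k t h hh θ φ hφsurj hφ ρ
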